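/- If G satisfies the property that any two vanishing elements lying in distinct conjugacy classes have orders with gcd at most 2, then for any normal subgroup N of G, the quotient G/N also satisfies this property. -/

import Mathlib

/-!
Inflating an irreducible character of `G ⧸ N` to `G` keeps it irreducible: since `G → G ⧸ N`
is surjective, inflation identifies the endomorphism spaces, and over `ℂ` a representation of a
finite group is irreducible exactly when its endomorphism space is one-dimensional. Its values
are unchanged, so vanishing elements of `G ⧸ N` lift to vanishing elements of `G`. Lifts of
non-conjugate elements are non-conjugate, and orders can only drop in the quotient.
-/

open CategoryTheory

/-- An element `g` of a group is a *vanishing element* if some irreducible complex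
character vanishes at `g`. -/
def IsVanishing {G : Type} [Group G] (g : G) : Prop :=
  ∃ V : FDRep ℂ G, Simple V ∧ V.character g = 0

universe u

namespace FDRep

variable {k : Type u} [Field k] [IsAlgClosed k] {G H : Type u} [Group G] [Group H]

noncomputable def resEndLinearEquiv {f : G →* H} (hf : Function.Surjective f) (V : FDRep k H) :
    (V ⟶ V) ≃ₗ[k] ((Action.res _ f).obj V ⟶ (Action.res _ f).obj V) :=
  have := Action.full_res (FGModuleCat k) f hf
  .ofBijective ((Action.res _ f).mapLinearMap k)
    ⟨(Action.res _ f).map_injective, (Action.res _ f).map_surjective⟩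

theorem simple_res_of_surjective [Finite G] [NeZero (Nat.card G : k)] {f : G →* H}
    (hf : Function.Surjective f) (V : FDRep k H) [Simple V] :
    Simple ((Action.res _ f).obj V) := by
  rw [simple_iff_end_is_rank_one, ← (resEndLinearEquiv hf V).finrank_eq]
  exact finrank_endomorphism_simple_eq_one k V

end FDRep

theorem IsVanishing.of_map {G H : Type} [Group G] [Finite G] [Group H] {f : G →* H}
    (hf : Function.Surjective f) {g : G} (h : IsVanishing (f g)) : IsVanishing g := by
  obtain ⟨V, hV, hχ⟩ := h
  exact ⟨(Action.res _ f).obj V, FDRep.simple_res_of_surjective hf V, hχ⟩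

theorem gcd_orderOf_map_le {G H : Type*} [Group G] [Finite G] [Group H] (f : G →* H) (x y : G) :
    Nat.gcd (orderOf (f x)) (orderOf (f y)) ≤ Nat.gcd (orderOf x) (orderOf y) :=
  Nat.le_of_dvd (Nat.gcd_pos_of_pos_left _ (orderOf_pos x))
    (gcd_dvd_gcd (orderOf_map_dvd f x) (orderOf_map_dvd f y))

/-- Property (⋆⋆). -/
def VanishingOrdersGcdLeTwo (G : Type) [Group G] : Prop :=
  ∀ x y : G, IsVanishing x → IsVanishing y → ¬ IsConj x y →
    Nat.gcd (orderOf x) (orderOf y) ≤ 2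

theorem VanishingOrdersGcdLeTwo.of_surjective {G H : Type} [Group G] [Finite G] [Group H]
    {f : G →* H} (hf : Function.Surjective f) (hG : VanishingOrdersGcdLeTwo G) :
    VanishingOrdersGcdLeTwo H := by
  intro x' y' hx hy hxy
  obtain ⟨x, rfl⟩ := hf x'
  obtain ⟨y, rfl⟩ := hf y'
  exact (gcd_orderOf_map_le f x y).trans
    (hG x y (hx.of_map hf) (hy.of_map hf) (fun h ↦ hxy (f.map_isConj h)))

/-- Property (⋆⋆) passes to quotients. -/
theorem stmt3 (G : Type) [Group G] [Fintype G] (N : Subgroup G) [N.Normal]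
    (hG : ∀ x y : G, IsVanishing x → IsVanishing y → ¬ IsConj x y →
      Nat.gcd (orderOf x) (orderOf y) ≤ 2) :
    ∀ x y : G ⧸ N, IsVanishing x → IsVanishing y → ¬ IsConj x y →
      Nat.gcd (orderOf x) (orderOf y) ≤ 2 :=
  VanishingOrdersGcdLeTwo.of_surjective (QuotientGroup.mk'_surjective N) hG
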